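/- Let Ψ be a nontrivial radial Blaschke Minkowski homomorphism on star bodies in R^n. For star bodies K, L and 0 ≤ i ≤ n-1, 0 ≤ j ≤ n-3: W̃_i(Ψ_j(K ~+ L))^{1/((n-i)(n-j-1))} ≤ W̃_i(Ψ_j K)^{1/((n-i)(n-j-1))} + W̃_i(Ψ_j L)^{1/((n-i)(n-j-1))}, with equality if and only if K and L are dilates. In particular, V(Ψ(K ~+ L))^{1/(n(n-1))} ≤ V(ΨK)^{1/(n(n-1))} + V(ΨL)^{1/(n(n-1))}. -/

import Mathlib

open MeasureTheory Metric
open scoped RealInnerProductSpace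

noncomputable section

/-- Euclidean space ℝⁿ. -/
abbrev Euc (n : ℕ) := EuclideanSpace ℝ (Fin n)

/-- The unit sphere S^{n-1} ⊂ ℝⁿ. -/
abbrev Sph (n : ℕ) := Metric.sphere (0 : Euc n) 1

/-- Spherical Lebesgue measure on S^{n-1}. -/
def sphMeasure (n : ℕ) [NeZero n] : Measure (Sph n) := volume.toSphere

/-- A star body (with respect to the origin) in ℝⁿ, described by its continuous
positive radial function on the unit sphere. -/
structure StarBody (n : ℕ) where
  radial : C(Sph n, ℝ)
  pos : ∀ u, 0 < radial u

/-- Two star bodies are dilates if their radial functions are proportional. -/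
def Dilates (n : ℕ) (K L : StarBody n) : Prop :=
  ∃ c : ℝ, 0 < c ∧ ∀ u, K.radial u = c * L.radial u

/-- The i-th dual quermassintegral W̃_i(L) = (1/n) ∫ ρ(L,u)^{n-i} du. -/
def dualQuermass (n : ℕ) [NeZero n] (i : ℕ) (L : StarBody n) : ℝ :=
  (1 / n : ℝ) * ∫ u, L.radial u ^ (n - i) ∂(sphMeasure n)

/-- The unit ball as a star body (radial function ≡ 1). -/
def unitStar (n : ℕ) : StarBody n := ⟨ContinuousMap.const _ 1, fun _ => one_pos⟩

/-- The radial Minkowski sum K ~+ L, with ρ(K ~+ L,·) = ρ(K,·) + ρ(L,·). -/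
def radAdd (n : ℕ) (K L : StarBody n) : StarBody n :=
  ⟨K.radial + L.radial, fun u => by simpa using add_pos (K.pos u) (L.pos u)⟩

/-!
With `m = n - 1 - j` and `q = (n - i) m`: since `Ψ` is a convolution with `μ`, the value
`ρ(Ψ_j M, η e) ^ (1 / m)` is the `L^m(μ)` norm of `ρ(M, ·) ∘ η`, so Minkowski's inequality gives
`ρ(Ψ_j (K ~+ L), ·) ^ (1 / m) ≤ ρ(Ψ_j K, ·) ^ (1 / m) + ρ(Ψ_j L, ·) ^ (1 / m)` on the whole sphere.
Up to the factor `n ^ (-1 / q)`, `W̃_i(Ψ_j M) ^ (1 / q)` is the `L^q` norm of `ρ(Ψ_j M, ·) ^ (1 / m)`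
on the sphere, and a second application of Minkowski's inequality gives the inequality.

Minkowski's inequality and its equality case both come from the strict convexity of `t ↦ t ^ p`.
Equality in the theorem forces equality in both applications. Spherical measure has full support,
so `ρ(Ψ_j K, ·) ^ (1 / m)` and `ρ(Ψ_j L, ·) ^ (1 / m)` are proportional, with equality in the inner
inequality everywhere; at a point `u₀` of the support of `μ` this yields
`ρ(K, η u₀) = c ρ(L, η u₀)` for every `η`, and the action is transitive.
-/

theorem add_div_add_rpow_le {p x y a b : ℝ} (hp : 1 < p) (hx : 0 ≤ x) (hy : 0 ≤ y)
    (ha : 0 < a) (hb : 0 < b) :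
    ((x + y) / (a + b)) ^ p ≤ a / (a + b) * (x / a) ^ p + b / (a + b) * (y / b) ^ p := by
  have hab : a / (a + b) + b / (a + b) = 1 := by field_simp
  have hcomb : a / (a + b) * (x / a) + b / (a + b) * (y / b) = (x + y) / (a + b) := by
    field_simp
  simpa only [smul_eq_mul, hcomb] using (strictConvexOn_rpow hp).convexOn.2
    (Set.mem_Ici.2 (div_nonneg hx ha.le)) (Set.mem_Ici.2 (div_nonneg hy hb.le))
    (by positivity) (by positivity) hab

theorem add_div_add_rpow_lt {p x y a b : ℝ} (hp : 1 < p) (hx : 0 ≤ x) (hy : 0 ≤ y)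
    (ha : 0 < a) (hb : 0 < b) (hne : x / a ≠ y / b) :
    ((x + y) / (a + b)) ^ p < a / (a + b) * (x / a) ^ p + b / (a + b) * (y / b) ^ p := by
  have hab : a / (a + b) + b / (a + b) = 1 := by field_simp
  have hcomb : a / (a + b) * (x / a) + b / (a + b) * (y / b) = (x + y) / (a + b) := by
    field_simp
  simpa only [smul_eq_mul, hcomb] using (strictConvexOn_rpow hp).2
    (Set.mem_Ici.2 (div_nonneg hx ha.le)) (Set.mem_Ici.2 (div_nonneg hy hb.le)) hne
    (by positivity) (by positivity) hab

section Minkowski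

variable {X : Type*} [MeasurableSpace X] {ν : Measure X} {p : ℝ} {f g h : X → ℝ}

-- the `L^p` norm of a nonnegative `f`; unlike `lpNorm`, no absolute value is taken
def lpNorm' (f : X → ℝ) (p : ℝ) (ν : Measure X) : ℝ := (∫ x, f x ^ p ∂ν) ^ (1 / p)

theorem lpNorm'_rpow (hf₀ : ∀ x, 0 ≤ f x) (hp : p ≠ 0) : lpNorm' f p ν ^ p = ∫ x, f x ^ p ∂ν := by
  rw [lpNorm', one_div,
    Real.rpow_inv_rpow (integral_nonneg fun x ↦ Real.rpow_nonneg (hf₀ x) p) hp]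

theorem integral_div_rpow (hf₀ : ∀ x, 0 ≤ f x) {c : ℝ} (hc : 0 ≤ c) :
    ∫ x, (f x / c) ^ p ∂ν = (∫ x, f x ^ p ∂ν) / c ^ p := by
  simp only [Real.div_rpow (hf₀ _) hc, integral_div]

variable [TopologicalSpace X] [CompactSpace X] [OpensMeasurableSpace X] [IsFiniteMeasure ν]

theorem Continuous.integrable_of_compactSpace (hf : Continuous f) : Integrable f ν :=
  hf.integrable_of_hasCompactSupport (HasCompactSupport.of_compactSpace _)

theorem integral_rpow_pos (hν : ν ≠ 0) (hf : Continuous f) (hf₀ : ∀ x, 0 < f x) (p : ℝ) :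
    0 < ∫ x, f x ^ p ∂ν := by
  have hfp₀ : ∀ x, 0 < f x ^ p := fun x ↦ Real.rpow_pos_of_pos (hf₀ x) p
  rw [integral_pos_iff_support_of_nonneg (fun x ↦ (hfp₀ x).le)
    (hf.rpow_const fun x ↦ .inl (hf₀ x).ne').integrable_of_compactSpace,
    Function.support_eq_univ fun x ↦ (hfp₀ x).ne']
  exact Measure.measure_univ_pos.2 hν

theorem lpNorm'_pos (hν : ν ≠ 0) (hf : Continuous f) (hf₀ : ∀ x, 0 < f x) (p : ℝ) :
    0 < lpNorm' f p ν :=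
  Real.rpow_pos_of_pos (integral_rpow_pos hν hf hf₀ p) _

theorem Continuous.eq_zero_of_integral_eq_zero (hh : Continuous h)
    (hh₀ : ∀ x, 0 ≤ h x) (hint : ∫ x, h x ∂ν = 0) {x : X} (hx : x ∈ ν.support) : h x = 0 := by
  by_contra hne
  have hae : h =ᵐ[ν] 0 :=
    (integral_eq_zero_iff_of_nonneg hh₀ hh.integrable_of_compactSpace).1 hint
  have hpos : 0 < ν {y | 0 < h y} := (Measure.mem_support_iff_forall x).1 hx _
    ((isOpen_lt continuous_const hh).mem_nhds (lt_of_le_of_ne (hh₀ x) (Ne.symm hne)))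
  exact hpos.ne' (measure_mono_null (fun y hy ↦ ne_of_gt hy) hae)

/-- `ψ` is the convexity defect of `t ↦ t ^ p` at `(f / F, g / G)` with weights
`F / (F + G)` and `G / (F + G)`, where `F` and `G` are the norms of `f` and `g`. -/
theorem exists_minkowski_defect (hν : ν ≠ 0) (hp : 1 < p) (hf : Continuous f)
    (hg : Continuous g) (hf₀ : ∀ x, 0 < f x) (hg₀ : ∀ x, 0 < g x) :
    ∃ ψ : X → ℝ, Continuous ψ ∧ (∀ x, 0 ≤ ψ x) ∧
      (∀ x, ψ x = 0 → f x / lpNorm' f p ν = g x / lpNorm' g p ν) ∧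
      ∫ x, ψ x ∂ν = 1 - (∫ x, (f + g) x ^ p ∂ν) / (lpNorm' f p ν + lpNorm' g p ν) ^ p := by
  set F := lpNorm' f p ν
  set G := lpNorm' g p ν
  have hF : 0 < F := lpNorm'_pos hν hf hf₀ p
  have hG : 0 < G := lpNorm'_pos hν hg hg₀ p
  have hcont : ∀ {h : X → ℝ} {c : ℝ}, Continuous h → (∀ x, 0 < h x) → 0 < c →
      Continuous fun x ↦ (h x / c) ^ p := fun hh hh₀ hc ↦
    (hh.div_const _).rpow_const fun x ↦ .inl (div_pos (hh₀ x) hc).ne'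
  have hfF := hcont hf hf₀ hF
  have hgG := hcont hg hg₀ hG
  have hfgFG := hcont (hf.add hg) (fun x ↦ add_pos (hf₀ x) (hg₀ x)) (add_pos hF hG)
  have hnormalized : ∀ {h : X → ℝ}, Continuous h → (∀ x, 0 < h x) →
      ∫ x, (h x / lpNorm' h p ν) ^ p ∂ν = 1 := fun hh hh₀ ↦ by
    rw [integral_div_rpow (fun x ↦ (hh₀ x).le) (lpNorm'_pos hν hh hh₀ p).le,
      ← lpNorm'_rpow (fun x ↦ (hh₀ x).le) (by linarith),
      div_self (Real.rpow_pos_of_pos (lpNorm'_pos hν hh hh₀ p) p).ne']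
  refine ⟨fun x ↦ F / (F + G) * (f x / F) ^ p + G / (F + G) * (g x / G) ^ p
      - ((f + g) x / (F + G)) ^ p, ?_, fun x ↦ ?_, fun x hx ↦ ?_, ?_⟩
  · exact ((continuous_const.mul hfF).add (continuous_const.mul hgG)).sub hfgFG
  · exact sub_nonneg.2 (add_div_add_rpow_le hp (hf₀ x).le (hg₀ x).le hF hG)
  · by_contra hne
    exact (sub_pos.2 (add_div_add_rpow_lt hp (hf₀ x).le (hg₀ x).le hF hG hne)).ne' hx
  · have hfF_int := hfF.integrable_of_compactSpace (ν := ν) |>.const_mul (F / (F + G))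
    have hgG_int := hgG.integrable_of_compactSpace (ν := ν) |>.const_mul (G / (F + G))
    beta_reduce
    rw [integral_sub (hfF_int.fun_add hgG_int) hfgFG.integrable_of_compactSpace,
      integral_add hfF_int hgG_int,
      integral_const_mul, integral_const_mul, hnormalized hf hf₀, hnormalized hg hg₀,
      integral_div_rpow (f := f + g) (fun x ↦ (add_pos (hf₀ x) (hg₀ x)).le) (add_pos hF hG).le]
    field_simp

theorem lpNorm'_add_le (hν : ν ≠ 0) (hp : 1 < p) (hf : Continuous f) (hg : Continuous g)
    (hf₀ : ∀ x, 0 < f x) (hg₀ : ∀ x, 0 < g x) :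
    lpNorm' (f + g) p ν ≤ lpNorm' f p ν + lpNorm' g p ν := by
  obtain ⟨ψ, -, hψ₀, -, hψ⟩ := exists_minkowski_defect hν hp hf hg hf₀ hg₀
  have hFG := add_pos (lpNorm'_pos hν hf hf₀ p) (lpNorm'_pos hν hg hg₀ p)
  have hle : ∫ x, (f + g) x ^ p ∂ν ≤ (lpNorm' f p ν + lpNorm' g p ν) ^ p := by
    have : 0 ≤ ∫ x, ψ x ∂ν := integral_nonneg hψ₀
    rw [hψ, sub_nonneg, div_le_one (Real.rpow_pos_of_pos hFG p)] at this
    exact this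
  calc lpNorm' (f + g) p ν ≤ ((lpNorm' f p ν + lpNorm' g p ν) ^ p) ^ (1 / p) :=
        Real.rpow_le_rpow (integral_nonneg fun x ↦ Real.rpow_nonneg
          (add_pos (hf₀ x) (hg₀ x)).le p) hle (by positivity)
    _ = lpNorm' f p ν + lpNorm' g p ν := by
        rw [one_div, Real.rpow_rpow_inv hFG.le (by linarith)]

theorem mul_lpNorm'_eq_of_lpNorm'_add_eq (hν : ν ≠ 0) (hp : 1 < p) (hf : Continuous f)
    (hg : Continuous g) (hf₀ : ∀ x, 0 < f x) (hg₀ : ∀ x, 0 < g x)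
    (heq : lpNorm' (f + g) p ν = lpNorm' f p ν + lpNorm' g p ν) {x : X} (hx : x ∈ ν.support) :
    f x * lpNorm' g p ν = g x * lpNorm' f p ν := by
  obtain ⟨ψ, hψc, hψ₀, hψ_eq, hψ⟩ := exists_minkowski_defect hν hp hf hg hf₀ hg₀
  have hFG := add_pos (lpNorm'_pos hν hf hf₀ p) (lpNorm'_pos hν hg hg₀ p)
  rw [← heq, ← lpNorm'_rpow (f := f + g) (fun x ↦ (add_pos (hf₀ x) (hg₀ x)).le) (by linarith),
    div_self (Real.rpow_pos_of_pos (heq ▸ hFG) p).ne', sub_self] at hψ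
  have := hψ_eq x (hψc.eq_zero_of_integral_eq_zero hψ₀ hψ hx)
  rwa [div_eq_div_iff (lpNorm'_pos hν hf hf₀ p).ne' (lpNorm'_pos hν hg hg₀ p).ne'] at this

theorem lpNorm'_mono (hp : 0 < p) (hf₀ : ∀ x, 0 ≤ f x) (hg : Continuous g) (hfg : ∀ x, f x ≤ g x) :
    lpNorm' f p ν ≤ lpNorm' g p ν := by
  refine Real.rpow_le_rpow (integral_nonneg fun x ↦ Real.rpow_nonneg (hf₀ x) p) ?_ (by positivity)
  refine integral_mono_of_nonneg (.of_forall fun x ↦ Real.rpow_nonneg (hf₀ x) p)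
    (hg.rpow_const fun x ↦ .inr hp.le).integrable_of_compactSpace (.of_forall fun x ↦ ?_)
  exact Real.rpow_le_rpow (hf₀ x) (hfg x) hp.le

theorem eq_of_le_of_lpNorm'_eq [ν.IsOpenPosMeasure] (hp : 0 < p) (hf : Continuous f)
    (hg : Continuous g) (hf₀ : ∀ x, 0 ≤ f x) (hfg : ∀ x, f x ≤ g x)
    (heq : lpNorm' f p ν = lpNorm' g p ν) (x : X) : f x = g x := by
  have hg₀ : ∀ x, 0 ≤ g x := fun x ↦ (hf₀ x).trans (hfg x)
  have hcont : Continuous fun x ↦ g x ^ p - f x ^ p :=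
    (hg.rpow_const fun x ↦ .inr hp.le).sub (hf.rpow_const fun x ↦ .inr hp.le)
  have hint : ∫ x, (g x ^ p - f x ^ p) ∂ν = 0 := by
    rw [integral_sub (hg.rpow_const fun x ↦ .inr hp.le).integrable_of_compactSpace
      (hf.rpow_const fun x ↦ .inr hp.le).integrable_of_compactSpace,
      ← lpNorm'_rpow hf₀ hp.ne', ← lpNorm'_rpow hg₀ hp.ne', heq, sub_self]
  have := hcont.eq_zero_of_integral_eq_zero
    (fun x ↦ sub_nonneg.2 (Real.rpow_le_rpow (hf₀ x) (hfg x) hp.le)) hint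
    (x := x) (by simp [Measure.support_eq_univ])
  exact (Real.rpow_left_inj (hf₀ x) (hg₀ x) hp.ne').1 (sub_eq_zero.1 this).symm

theorem lpNorm'_le_add_of_le_add (hν : ν ≠ 0) (hp : 1 < p) (hf : Continuous f)
    (hg : Continuous g) (hf₀ : ∀ x, 0 < f x) (hg₀ : ∀ x, 0 < g x) (h₀ : ∀ x, 0 ≤ h x)
    (hle : ∀ x, h x ≤ f x + g x) :
    lpNorm' h p ν ≤ lpNorm' f p ν + lpNorm' g p ν :=
  (lpNorm'_mono (by linarith) h₀ (hf.add hg) hle).trans (lpNorm'_add_le hν hp hf hg hf₀ hg₀)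

theorem eq_add_and_mul_lpNorm'_eq_of_lpNorm'_eq_add [ν.IsOpenPosMeasure] (hν : ν ≠ 0)
    (hp : 1 < p) (hf : Continuous f) (hg : Continuous g) (hh : Continuous h)
    (hf₀ : ∀ x, 0 < f x) (hg₀ : ∀ x, 0 < g x) (h₀ : ∀ x, 0 ≤ h x)
    (hle : ∀ x, h x ≤ f x + g x) (heq : lpNorm' h p ν = lpNorm' f p ν + lpNorm' g p ν) :
    (∀ x, h x = f x + g x) ∧ ∀ x, f x * lpNorm' g p ν = g x * lpNorm' f p ν := by
  have hadd : lpNorm' (f + g) p ν = lpNorm' f p ν + lpNorm' g p ν :=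
    le_antisymm (lpNorm'_add_le hν hp hf hg hf₀ hg₀)
      (heq ▸ lpNorm'_mono (by linarith) h₀ (hf.add hg) hle)
  refine ⟨eq_of_le_of_lpNorm'_eq (by linarith) hh (hf.add hg) h₀ hle (heq.trans hadd.symm),
    fun x ↦ mul_lpNorm'_eq_of_lpNorm'_add_eq hν hp hf hg hf₀ hg₀ hadd ?_⟩
  simp [Measure.support_eq_univ]

end Minkowski

theorem exists_act_eq {G X : Type*} [Group G] {act : G → X → X} (hone : ∀ u, act 1 u = u)
    (hmul : ∀ η τ u, act (η * τ) u = act η (act τ u)) {e : X} (htrans : ∀ u, ∃ η, act η e = u)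
    (u w : X) : ∃ η, act η u = w := by
  obtain ⟨η₁, rfl⟩ := htrans u
  obtain ⟨η₂, rfl⟩ := htrans w
  exact ⟨η₂ * η₁⁻¹, by rw [hmul, ← hmul η₁⁻¹, inv_mul_cancel, hone]⟩

theorem Fin.prod_ite_val_lt {M : Type*} [CommMonoid M] {N t : ℕ} (ht : t ≤ N) (x : M) :
    (∏ k : Fin N, if (k : ℕ) < t then x else 1) = x ^ t := by
  rw [← Finset.prod_filter, Finset.prod_const, Fin.card_filter_val_lt, min_eq_right ht]

section StarBody

variable {n : ℕ}

theorem StarBody.continuous_radial_rpow (M : StarBody n) (r : ℝ) :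
    Continuous fun u ↦ M.radial u ^ r :=
  M.radial.continuous.rpow_const fun u ↦ .inl (M.pos u).ne'

theorem StarBody.radial_rpow_pos (M : StarBody n) (r : ℝ) (u : Sph n) : 0 < M.radial u ^ r :=
  Real.rpow_pos_of_pos (M.pos u) r

variable [NeZero n]

instance : IsFiniteMeasure (sphMeasure n) := by
  unfold sphMeasure; infer_instance

instance : (sphMeasure n).IsOpenPosMeasure := by
  unfold sphMeasure; infer_instance

theorem sphMeasure_ne_zero : sphMeasure n ≠ 0 :=
  Measure.toSphere_ne_zero _

theorem dualQuermass_nonneg (i : ℕ) (M : StarBody n) : 0 ≤ dualQuermass n i M :=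
  mul_nonneg (by positivity) (integral_nonneg fun u ↦ pow_nonneg (M.pos u).le _)

theorem dualQuermass_eq_of_radial_eq_mul {i : ℕ} {M N : StarBody n} {c : ℝ}
    (h : ∀ u, M.radial u = c * N.radial u) :
    dualQuermass n i M = c ^ (n - i) * dualQuermass n i N := by
  simp only [dualQuermass, h, mul_pow, integral_const_mul]
  ring

theorem dualQuermass_rpow_eq_mul_of_radial_eq_pow_mul {i m : ℕ} (hq : (n - i) * m ≠ 0)
    {M N : StarBody n} {d : ℝ} (hd : 0 ≤ d) (h : ∀ u, M.radial u = d ^ m * N.radial u) :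
    dualQuermass n i M ^ (1 / (((n - i) * m : ℕ) : ℝ)) =
      d * dualQuermass n i N ^ (1 / (((n - i) * m : ℕ) : ℝ)) := by
  rw [dualQuermass_eq_of_radial_eq_mul h, ← pow_mul, mul_comm m,
    Real.mul_rpow (by positivity) (dualQuermass_nonneg i N), one_div,
    Real.pow_rpow_inv_natCast hd hq]

theorem dualQuermass_rpow_eq_lpNorm' {i m : ℕ} (hm : m ≠ 0) (M : StarBody n) :
    dualQuermass n i M ^ (1 / (((n - i) * m : ℕ) : ℝ)) =
      (1 / n : ℝ) ^ (1 / (((n - i) * m : ℕ) : ℝ)) *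
        lpNorm' (fun u ↦ M.radial u ^ (1 / (m : ℝ))) ((n - i) * m : ℕ) (sphMeasure n) := by
  have hpow : ∀ u, (M.radial u ^ (1 / (m : ℝ))) ^ (((n - i) * m : ℕ) : ℝ) =
      M.radial u ^ (n - i) := fun u ↦ by
    rw [← Real.rpow_mul (M.pos u).le, ← Real.rpow_natCast]
    congr 1
    push_cast
    field_simp
  rw [dualQuermass, Real.mul_rpow (by positivity)
    (integral_nonneg fun u ↦ pow_nonneg (M.pos u).le _), lpNorm']
  simp only [hpow]

end StarBody

section RadialConvolution

variable {n : ℕ} {G : Type*} {act : G → Sph n → Sph n} {e : Sph n} {μ : Measure (Sph n)}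
  {Ψm : (Fin (n - 1) → StarBody n) → StarBody n}

-- `ρ(Ψ(L₁, …, L_{n-1}), ·) = (ρ(L₁, ·) ⋯ ρ(L_{n-1}, ·)) ∗ μ`, read along the orbit of `e`
def IsRadialConvolution (Ψm : (Fin (n - 1) → StarBody n) → StarBody n) (act : G → Sph n → Sph n)
    (e : Sph n) (μ : Measure (Sph n)) : Prop :=
  ∀ (F : Fin (n - 1) → StarBody n) (η : G),
    (Ψm F).radial (act η e) = ∫ u, ∏ k, (F k).radial (act η u) ∂μ

-- `Ψ_j M = Ψ(M, …, M, B, …, B)`, with `j` copies of the unit ball `B`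
def mixedWithBall (Ψm : (Fin (n - 1) → StarBody n) → StarBody n) (j : ℕ) (M : StarBody n) :
    StarBody n :=
  Ψm fun k ↦ if (k : ℕ) < n - 1 - j then M else unitStar n

namespace IsRadialConvolution

theorem radial_mixedWithBall (hΨ : IsRadialConvolution Ψm act e μ) (j : ℕ) (M : StarBody n)
    (η : G) :
    (mixedWithBall Ψm j M).radial (act η e) = ∫ u, M.radial (act η u) ^ (n - 1 - j) ∂μ := by
  rw [mixedWithBall, hΨ]
  congr 1 with u
  simp only [apply_ite (fun M : StarBody n ↦ M.radial (act η u)), unitStar,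
    ContinuousMap.const_apply]
  exact Fin.prod_ite_val_lt (by omega) _

theorem radial_mixedWithBall_rpow (hΨ : IsRadialConvolution Ψm act e μ) (j : ℕ)
    (M : StarBody n) (η : G) :
    (mixedWithBall Ψm j M).radial (act η e) ^ (1 / ((n - 1 - j : ℕ) : ℝ)) =
      lpNorm' (fun u ↦ M.radial (act η u)) (n - 1 - j : ℕ) μ := by
  simp only [lpNorm', Real.rpow_natCast, hΨ.radial_mixedWithBall]

theorem radial_mixedWithBall_eq_pow_mul (hΨ : IsRadialConvolution Ψm act e μ)
    (htrans : ∀ v, ∃ η, act η e = v) {M N : StarBody n} {c : ℝ}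
    (h : ∀ u, M.radial u = c * N.radial u) (j : ℕ) (v : Sph n) :
    (mixedWithBall Ψm j M).radial v = c ^ (n - 1 - j) * (mixedWithBall Ψm j N).radial v := by
  obtain ⟨η, rfl⟩ := htrans v
  simp only [hΨ.radial_mixedWithBall, h, mul_pow, integral_const_mul]

variable [IsFiniteMeasure μ]

theorem radial_mixedWithBall_radAdd_rpow_le (hΨ : IsRadialConvolution Ψm act e μ)
    (hact : ∀ η, Continuous (act η)) (hμ : μ ≠ 0) (htrans : ∀ v, ∃ η, act η e = v) {j : ℕ}
    (hj : 1 < n - 1 - j) (K L : StarBody n) (v : Sph n) :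
    (mixedWithBall Ψm j (radAdd n K L)).radial v ^ (1 / ((n - 1 - j : ℕ) : ℝ)) ≤
      (mixedWithBall Ψm j K).radial v ^ (1 / ((n - 1 - j : ℕ) : ℝ)) +
        (mixedWithBall Ψm j L).radial v ^ (1 / ((n - 1 - j : ℕ) : ℝ)) := by
  obtain ⟨η, rfl⟩ := htrans v
  simp only [hΨ.radial_mixedWithBall_rpow]
  exact lpNorm'_add_le hμ (by exact_mod_cast hj) (K.radial.continuous.comp (hact η))
    (L.radial.continuous.comp (hact η)) (fun u ↦ K.pos _) (fun u ↦ L.pos _)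

theorem radial_mul_eq_of_radial_mixedWithBall_radAdd_rpow_eq
    (hΨ : IsRadialConvolution Ψm act e μ) (hact : ∀ η, Continuous (act η)) (hμ : μ ≠ 0)
    {j : ℕ} (hj : 1 < n - 1 - j) {K L : StarBody n} {η : G}
    (heq : (mixedWithBall Ψm j (radAdd n K L)).radial (act η e) ^ (1 / ((n - 1 - j : ℕ) : ℝ)) =
      (mixedWithBall Ψm j K).radial (act η e) ^ (1 / ((n - 1 - j : ℕ) : ℝ)) +
        (mixedWithBall Ψm j L).radial (act η e) ^ (1 / ((n - 1 - j : ℕ) : ℝ)))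
    {u : Sph n} (hu : u ∈ μ.support) :
    K.radial (act η u) * (mixedWithBall Ψm j L).radial (act η e) ^ (1 / ((n - 1 - j : ℕ) : ℝ)) =
      L.radial (act η u) *
        (mixedWithBall Ψm j K).radial (act η e) ^ (1 / ((n - 1 - j : ℕ) : ℝ)) := by
  simp only [hΨ.radial_mixedWithBall_rpow] at heq ⊢
  exact mul_lpNorm'_eq_of_lpNorm'_add_eq hμ (by exact_mod_cast hj)
    (K.radial.continuous.comp (hact η)) (L.radial.continuous.comp (hact η))
    (fun u ↦ K.pos _) (fun u ↦ L.pos _) heq hu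

theorem dilates_of_radial_mixedWithBall_rpow_eq (hΨ : IsRadialConvolution Ψm act e μ)
    (hact : ∀ η, Continuous (act η)) (hμ : μ ≠ 0) (hpretrans : ∀ u w : Sph n, ∃ η, act η u = w)
    {j : ℕ} (hj : 1 < n - 1 - j) {K L : StarBody n} {c : ℝ} (hc : 0 < c)
    (hadd : ∀ v, (mixedWithBall Ψm j (radAdd n K L)).radial v ^ (1 / ((n - 1 - j : ℕ) : ℝ)) =
      (mixedWithBall Ψm j K).radial v ^ (1 / ((n - 1 - j : ℕ) : ℝ)) +
        (mixedWithBall Ψm j L).radial v ^ (1 / ((n - 1 - j : ℕ) : ℝ)))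
    (hprop : ∀ v, (mixedWithBall Ψm j K).radial v ^ (1 / ((n - 1 - j : ℕ) : ℝ)) =
      c * (mixedWithBall Ψm j L).radial v ^ (1 / ((n - 1 - j : ℕ) : ℝ))) :
    Dilates n K L := by
  obtain ⟨u₀, hu₀⟩ := Measure.nonempty_support hμ
  refine ⟨c, hc, fun w ↦ ?_⟩
  obtain ⟨η, rfl⟩ := hpretrans u₀ w
  have h := hΨ.radial_mul_eq_of_radial_mixedWithBall_radAdd_rpow_eq hact hμ hj (hadd (act η e)) hu₀
  rw [hprop, ← mul_assoc, mul_comm _ c] at h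
  exact mul_right_cancel₀ ((mixedWithBall Ψm j L).radial_rpow_pos _ _).ne' h

variable [NeZero n]

theorem dualQuermass_mixedWithBall_radAdd_rpow_le (hΨ : IsRadialConvolution Ψm act e μ)
    (hact : ∀ η, Continuous (act η)) (hμ : μ ≠ 0) (htrans : ∀ v, ∃ η, act η e = v)
    {i j : ℕ} (hi : i < n) (hj : 1 < n - 1 - j) (K L : StarBody n) :
    dualQuermass n i (mixedWithBall Ψm j (radAdd n K L)) ^ (1 / (((n - i) * (n - 1 - j) : ℕ) : ℝ)) ≤
      dualQuermass n i (mixedWithBall Ψm j K) ^ (1 / (((n - i) * (n - 1 - j) : ℕ) : ℝ)) +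
        dualQuermass n i (mixedWithBall Ψm j L) ^ (1 / (((n - i) * (n - 1 - j) : ℕ) : ℝ)) := by
  have hq : 1 < (n - i) * (n - 1 - j) := lt_of_lt_of_le hj (Nat.le_mul_of_pos_left _ (by omega))
  simp only [dualQuermass_rpow_eq_lpNorm' (by omega : n - 1 - j ≠ 0), ← mul_add]
  gcongr
  refine lpNorm'_le_add_of_le_add sphMeasure_ne_zero (by exact_mod_cast hq)
    ((mixedWithBall Ψm j K).continuous_radial_rpow _)
    ((mixedWithBall Ψm j L).continuous_radial_rpow _)
    ((mixedWithBall Ψm j K).radial_rpow_pos _) ((mixedWithBall Ψm j L).radial_rpow_pos _)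
    (fun v ↦ ((mixedWithBall Ψm j _).radial_rpow_pos _ v).le)
    (hΨ.radial_mixedWithBall_radAdd_rpow_le hact hμ htrans hj K L)

theorem dualQuermass_mixedWithBall_radAdd_rpow_eq_iff (hΨ : IsRadialConvolution Ψm act e μ)
    (hact : ∀ η, Continuous (act η)) (hμ : μ ≠ 0) (hpretrans : ∀ u w : Sph n, ∃ η, act η u = w)
    {i j : ℕ} (hi : i < n) (hj : 1 < n - 1 - j) (K L : StarBody n) :
    dualQuermass n i (mixedWithBall Ψm j (radAdd n K L)) ^ (1 / (((n - i) * (n - 1 - j) : ℕ) : ℝ)) =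
      dualQuermass n i (mixedWithBall Ψm j K) ^ (1 / (((n - i) * (n - 1 - j) : ℕ) : ℝ)) +
        dualQuermass n i (mixedWithBall Ψm j L) ^ (1 / (((n - i) * (n - 1 - j) : ℕ) : ℝ)) ↔
      Dilates n K L := by
  have hq : 1 < (n - i) * (n - 1 - j) := lt_of_lt_of_le hj (Nat.le_mul_of_pos_left _ (by omega))
  have hn : (0 : ℝ) < 1 / n := by
    have := NeZero.pos n
    positivity
  constructor
  · intro heq
    simp only [dualQuermass_rpow_eq_lpNorm' (by omega : n - 1 - j ≠ 0), ← mul_add] at heq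
    have hρ (M : StarBody n) :=
      (mixedWithBall Ψm j M).continuous_radial_rpow (1 / ((n - 1 - j : ℕ) : ℝ))
    have hρ₀ (M : StarBody n) :=
      (mixedWithBall Ψm j M).radial_rpow_pos (1 / ((n - 1 - j : ℕ) : ℝ))
    obtain ⟨hadd, hprop⟩ := eq_add_and_mul_lpNorm'_eq_of_lpNorm'_eq_add sphMeasure_ne_zero
      (by exact_mod_cast hq) (hρ K) (hρ L) (hρ _) (hρ₀ K) (hρ₀ L) (fun v ↦ (hρ₀ _ v).le)
      (hΨ.radial_mixedWithBall_radAdd_rpow_le hact hμ (hpretrans e) hj K L)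
      (mul_left_cancel₀ (Real.rpow_pos_of_pos hn _).ne' heq)
    have hN (M : StarBody n) := lpNorm'_pos sphMeasure_ne_zero (hρ M) (hρ₀ M)
      (((n - i) * (n - 1 - j) : ℕ) : ℝ)
    refine hΨ.dilates_of_radial_mixedWithBall_rpow_eq hact hμ hpretrans hj
      (div_pos (hN K) (hN L)) hadd fun v ↦ ?_
    rw [div_mul_eq_mul_div, eq_div_iff (hN L).ne', hprop v, mul_comm]
  · rintro ⟨c, hc, hKL⟩
    have hS : ∀ u, (radAdd n K L).radial u = (1 + c) * L.radial u := fun u ↦ by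
      simp only [radAdd, ContinuousMap.add_apply, hKL]
      ring
    rw [dualQuermass_rpow_eq_mul_of_radial_eq_pow_mul (by omega) (by positivity)
        (hΨ.radial_mixedWithBall_eq_pow_mul (hpretrans e) hS j),
      dualQuermass_rpow_eq_mul_of_radial_eq_pow_mul (by omega) hc.le
        (hΨ.radial_mixedWithBall_eq_pow_mul (hpretrans e) hKL j)]
    ring

end IsRadialConvolution

end RadialConvolution

theorem stmt19_general (n i j : ℕ) (hn : 3 ≤ n) [NeZero n]
    (hi : i ≤ n - 1) (hj : j ≤ n - 3)
    (G : Type*) [Group G] [TopologicalSpace G]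
    (act : G → Sph n → Sph n)
    (hact_one : ∀ u, act 1 u = u)
    (hact_mul : ∀ η τ u, act (η * τ) u = act η (act τ u))
    (hact_cont : Continuous fun p : G × Sph n => act p.1 p.2)
    (e : Sph n)
    (htrans : ∀ u : Sph n, ∃ η : G, act η e = u)
    (μ : Measure (Sph n)) [IsFiniteMeasure μ] (hμne : μ ≠ 0)
    (Ψm : (Fin (n - 1) → StarBody n) → StarBody n)
    (hrep : ∀ (F : Fin (n - 1) → StarBody n) (η : G),
      (Ψm F).radial (act η e) = ∫ u, ∏ k, (F k).radial (act η u) ∂μ)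
    (K L : StarBody n) :
    -- Ψ_j M = Ψ(M,…,M,B,…,B) with j copies of B
    let Ψj : ℕ → StarBody n → StarBody n := fun j' M =>
      Ψm fun k => if (k : ℕ) < n - 1 - j' then M else unitStar n
    let a : ℝ := 1 / (((n - i) * (n - j - 1) : ℕ) : ℝ)
    dualQuermass n i (Ψj j (radAdd n K L)) ^ a ≤
      dualQuermass n i (Ψj j K) ^ a + dualQuermass n i (Ψj j L) ^ a ∧
    (dualQuermass n i (Ψj j (radAdd n K L)) ^ a =
      dualQuermass n i (Ψj j K) ^ a + dualQuermass n i (Ψj j L) ^ a ↔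
      Dilates n K L) ∧
    dualQuermass n 0 (Ψj 0 (radAdd n K L)) ^ ((1 : ℝ) / ((n * (n - 1) : ℕ) : ℝ)) ≤
      dualQuermass n 0 (Ψj 0 K) ^ ((1 : ℝ) / ((n * (n - 1) : ℕ) : ℝ)) +
      dualQuermass n 0 (Ψj 0 L) ^ ((1 : ℝ) / ((n * (n - 1) : ℕ) : ℝ)) := by
  intro Ψj a
  have hΨ : IsRadialConvolution Ψm act e μ := hrep
  have hact (η : G) : Continuous (act η) := hact_cont.comp (Continuous.prodMk_right η)
  have hpretrans := exists_act_eq hact_one hact_mul htrans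
  have hji : n - j - 1 = n - 1 - j := by omega
  simp only [a, hji]
  refine ⟨?_, ?_, ?_⟩
  · exact hΨ.dualQuermass_mixedWithBall_radAdd_rpow_le hact hμne htrans (by omega) (by omega) K L
  · exact hΨ.dualQuermass_mixedWithBall_radAdd_rpow_eq_iff hact hμne hpretrans (by omega)
      (by omega) K L
  · exact hΨ.dualQuermass_mixedWithBall_radAdd_rpow_le hact hμne htrans (i := 0) (j := 0)
      (by omega) (by omega) K L

/-- Dual Brunn–Minkowski inequality for a nontrivial radial Blaschke Minkowski
homomorphism Ψ: for star bodies K, L and 0 ≤ i ≤ n-1, 0 ≤ j ≤ n-3,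
W̃_i(Ψ_j(K ~+ L))^{1/((n-i)(n-j-1))} ≤ W̃_i(Ψ_j K)^{1/((n-i)(n-j-1))} + W̃_i(Ψ_j L)^{1/((n-i)(n-j-1))},
with equality iff K and L are dilates; in particular
V(Ψ(K ~+ L))^{1/(n(n-1))} ≤ V(ΨK)^{1/(n(n-1))} + V(ΨL)^{1/(n(n-1))}.
Here Ψ_j K = Ψ(K,…,K,B,…,B) with j copies of the unit ball B. -/
theorem stmt19 (n i j : ℕ) (hn : 3 ≤ n) [NeZero n]
    (hi : i ≤ n - 1) (hj : j ≤ n - 3)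
    (G : Type*) [Group G] [TopologicalSpace G] [IsTopologicalGroup G]
    [MeasurableSpace G] [BorelSpace G]
    (act : G → Sph n → Sph n)
    (hact_one : ∀ u, act 1 u = u)
    (hact_mul : ∀ η τ u, act (η * τ) u = act η (act τ u))
    (hact_cont : Continuous fun p : G × Sph n => act p.1 p.2)
    (e : Sph n)
    (htrans : ∀ u : Sph n, ∃ η : G, act η e = u)
    (hinv : ∀ ϑ : G, (sphMeasure n).map (act ϑ) = sphMeasure n)
    (μ : Measure (Sph n)) [IsFiniteMeasure μ] (hμne : μ ≠ 0)
    (hzonal : ∀ ϑ : G, act ϑ e = e → μ.map (act ϑ) = μ)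
    (Ψm : (Fin (n - 1) → StarBody n) → StarBody n)
    (hrep : ∀ (F : Fin (n - 1) → StarBody n) (η : G),
      (Ψm F).radial (act η e) = ∫ u, ∏ k, (F k).radial (act η u) ∂μ)
    (K L : StarBody n) :
    -- Ψ_j M = Ψ(M,…,M,B,…,B) with j copies of B
    let Ψj : ℕ → StarBody n → StarBody n := fun j' M =>
      Ψm fun k => if (k : ℕ) < n - 1 - j' then M else unitStar n
    let a : ℝ := 1 / (((n - i) * (n - j - 1) : ℕ) : ℝ)
    dualQuermass n i (Ψj j (radAdd n K L)) ^ a ≤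
      dualQuermass n i (Ψj j K) ^ a + dualQuermass n i (Ψj j L) ^ a ∧
    (dualQuermass n i (Ψj j (radAdd n K L)) ^ a =
      dualQuermass n i (Ψj j K) ^ a + dualQuermass n i (Ψj j L) ^ a ↔
      Dilates n K L) ∧
    dualQuermass n 0 (Ψj 0 (radAdd n K L)) ^ ((1 : ℝ) / ((n * (n - 1) : ℕ) : ℝ)) ≤
      dualQuermass n 0 (Ψj 0 K) ^ ((1 : ℝ) / ((n * (n - 1) : ℕ) : ℝ)) +
      dualQuermass n 0 (Ψj 0 L) ^ ((1 : ℝ) / ((n * (n - 1) : ℕ) : ℝ)) :=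
  stmt19_general n i j hn hi hj G act hact_one hact_mul hact_cont e htrans μ hμne Ψm hrep K L
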